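/- For all n ≥ 1, the number of increasing ordered trees with n edges (with vertices labeled 0,1,...,n, each child exceeding its parent) equals the odd double factorial (2n-1)!! = 1·3·5···(2n-1). -/

import Mathlib

/-
The largest label of an increasing tree sits on a leaf, so every increasing ordered tree of
size `n + 1` arises in exactly one way from one of size `n` by grafting a leaf labelled `n + 1`.
A tree with `n` edges offers `2n + 1` places for that leaf (a vertex with `k` children offers
`k + 1`, and the numbers of children add up to `n`), hence `c (n + 1) = (2n + 1) * c n` with
`c 0 = 1`.
-/

inductive OTree : Type where
  | node : ℕ → List OTree → OTree

/-- The label of the root of the tree. -/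
def OTree.label : OTree → ℕ
  | .node l _ => l

/-- The (ordered) list of subtrees at the root. -/
def OTree.children : OTree → List OTree
  | .node _ ts => ts

/-- Labels of all vertices in preorder. -/
def OTree.preorder : OTree → List ℕ
  | .node l ts => l :: (ts.attach.map (fun t => OTree.preorder t.1)).flatten
decreasing_by
  have := List.sizeOf_lt_of_mem t.2
  simp only [OTree.node.sizeOf_spec]
  omega

/-- Labels of the leaves, in preorder (walkaround) order. -/
def OTree.leaves : OTree → List ℕ
  | .node l ts =>
      if ts.isEmpty then [l] else (ts.attach.map (fun t => OTree.leaves t.1)).flatten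
decreasing_by
  have := List.sizeOf_lt_of_mem t.2
  simp only [OTree.node.sizeOf_spec]
  omega

/-- Each child's label exceeds its parent's label. -/
inductive OTree.Increasing : OTree → Prop where
  | node : ∀ (l : ℕ) (ts : List OTree),
      (∀ t ∈ ts, l < t.label) → (∀ t ∈ ts, t.Increasing) →
      OTree.Increasing (.node l ts)

/-- An increasing ordered tree of size `n` (i.e. with `n` edges): an ordered
tree with `n+1` vertices labeled `0,1,...,n` (each label used exactly once, as
recorded by the preorder list of labels), rooted at the vertex labeled `0`,
such that each child's label exceeds its parent's label. -/
def IsIncOrdTree (n : ℕ) (t : OTree) : Prop :=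
  t.label = 0 ∧ t.preorder.Perm (List.range (n + 1)) ∧ t.Increasing

/-- The labels of the leaves, taken in preorder, are increasing. -/
def HasIncLeaves (t : OTree) : Prop :=
  t.leaves.Pairwise (· < ·)

namespace OTree

def forestPreorder (ts : List OTree) : List ℕ := (ts.map preorder).flatten

def numSlots (ts : List OTree) : ℕ := 2 * (forestPreorder ts).length + 1

/-- The `numSlots ts` positions in a forest are numbered in preorder: `0` is in front of the
first tree, then come the positions among the children of its root, then those in the remaining
trees. -/
def insertLeaf (m : ℕ) : List OTree → ℕ → List OTree
  | [], _ => [node m []]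
  | node l cs :: ts, j =>
    if j = 0 then node m [] :: node l cs :: ts
    else if j ≤ numSlots cs then node l (insertLeaf m cs (j - 1)) :: ts
    else node l cs :: insertLeaf m ts (j - 1 - numSlots cs)

/-- Removes the first vertex labelled `m` and returns the position it occupied; this undoes
`insertLeaf m` when that vertex is a leaf. -/
def eraseLeaf (m : ℕ) : List OTree → List OTree × ℕ
  | [] => ([], 0)
  | node l cs :: ts =>
    if l = m then (ts, 0)
    else if m ∈ forestPreorder cs then
      (node l (eraseLeaf m cs).1 :: ts, (eraseLeaf m cs).2 + 1)
    else (node l cs :: (eraseLeaf m ts).1, (eraseLeaf m ts).2 + 1 + numSlots cs)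

@[simp] theorem preorder_node (l : ℕ) (ts : List OTree) :
    (node l ts).preorder = l :: forestPreorder ts := by
  rw [preorder, forestPreorder]
  simp

@[simp] theorem forestPreorder_nil : forestPreorder [] = [] := rfl

@[simp] theorem forestPreorder_cons (t : OTree) (ts : List OTree) :
    forestPreorder (t :: ts) = t.preorder ++ forestPreorder ts := by
  simp [forestPreorder]

theorem numSlots_cons (l : ℕ) (cs ts : List OTree) :
    numSlots (node l cs :: ts) = numSlots cs + numSlots ts + 1 := by
  simp only [numSlots, forestPreorder_cons, preorder_node, List.length_append, List.length_cons]
  ring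

theorem one_le_numSlots (ts : List OTree) : 1 ≤ numSlots ts := by simp [numSlots]

theorem label_mem_preorder (t : OTree) : t.label ∈ t.preorder := by
  cases t; simp [label]

theorem insertLeaf_zero (m : ℕ) (ts : List OTree) : insertLeaf m ts 0 = node m [] :: ts := by
  cases ts with
  | nil => simp [insertLeaf]
  | cons t ts => cases t; simp [insertLeaf]

theorem perm_forestPreorder_insertLeaf (m : ℕ) (ts : List OTree) (j : ℕ) :
    (forestPreorder (insertLeaf m ts j)).Perm (m :: forestPreorder ts) := by
  fun_induction insertLeaf m ts j with
  | case1 => simp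
  | case2 => simp
  | case3 l cs _ _ _ _ ih => simpa using ((ih.append_right _).cons l).trans (.swap _ _ _)
  | case4 l cs _ _ _ _ ih =>
    have := ((ih.append_left (forestPreorder cs)).trans List.perm_middle).cons l
    simpa using this.trans (.swap _ _ _)

theorem mem_forestPreorder_insertLeaf (m : ℕ) (ts : List OTree) (j : ℕ) :
    m ∈ forestPreorder (insertLeaf m ts j) :=
  (perm_forestPreorder_insertLeaf m ts j).mem_iff.2 List.mem_cons_self

theorem increasing_node_iff {l : ℕ} {ts : List OTree} :
    (node l ts).Increasing ↔ ∀ t ∈ ts, l < t.label ∧ t.Increasing := by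
  refine ⟨fun ⟨_, _, hlt, hinc⟩ t ht => ⟨hlt t ht, hinc t ht⟩, fun h => ?_⟩
  exact .node l ts (fun t ht => (h t ht).1) (fun t ht => (h t ht).2)

theorem increasing_insertLeaf {m l : ℕ} {ts : List OTree} (h : (node l ts).Increasing)
    (hm : ∀ x ∈ (node l ts).preorder, x < m) (j : ℕ) :
    (node l (insertLeaf m ts j)).Increasing := by
  fun_induction insertLeaf m ts j generalizing l with
  | case1 => simpa [increasing_node_iff, label] using hm
  | case2 => simp_all [increasing_node_iff, label]
  | case3 l' cs ts j _ _ ih =>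
    rw [increasing_node_iff, List.forall_mem_cons] at h ⊢
    exact ⟨⟨h.1.1, ih h.1.2 fun x hx => hm x (by simp at hx ⊢; tauto)⟩, h.2⟩
  | case4 l' cs ts j _ _ ih =>
    rw [increasing_node_iff, List.forall_mem_cons] at h ⊢
    have := ih (increasing_node_iff.2 h.2) fun x hx => hm x (by simp at hx ⊢; tauto)
    exact ⟨h.1, increasing_node_iff.1 this⟩

theorem increasing_of_insertLeaf {m l : ℕ} {ts : List OTree} {j : ℕ}
    (h : (node l (insertLeaf m ts j)).Increasing) : (node l ts).Increasing := by
  fun_induction insertLeaf m ts j generalizing l with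
  | case1 => simp [increasing_node_iff]
  | case2 => simp_all [increasing_node_iff]
  | case3 l' cs ts j _ _ ih =>
    rw [increasing_node_iff, List.forall_mem_cons] at h ⊢
    exact ⟨⟨h.1.1, ih h.1.2⟩, h.2⟩
  | case4 l' cs ts j _ _ ih =>
    rw [increasing_node_iff, List.forall_mem_cons] at h ⊢
    exact ⟨h.1, increasing_node_iff.1 (ih (increasing_node_iff.2 h.2))⟩

theorem eraseLeaf_insertLeaf {m : ℕ} {ts : List OTree} {j : ℕ} (hm : m ∉ forestPreorder ts)
    (hj : j < numSlots ts) : eraseLeaf m (insertLeaf m ts j) = (ts, j) := by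
  fun_induction insertLeaf m ts j with
  | case1 => simp_all [numSlots, eraseLeaf]
  | case2 => simp [eraseLeaf]
  | case3 l cs ts j hj0 _ ih =>
    simp only [forestPreorder_cons, preorder_node, List.mem_cons, List.mem_append, not_or] at hm
    rw [eraseLeaf, if_neg (Ne.symm hm.1.1), if_pos (mem_forestPreorder_insertLeaf m cs _),
      ih hm.1.2 (by omega)]
    simp only [Prod.mk.injEq, true_and]
    omega
  | case4 l cs ts j hj0 hj1 ih =>
    simp only [forestPreorder_cons, preorder_node, List.mem_cons, List.mem_append, not_or] at hm
    rw [numSlots_cons] at hj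
    rw [eraseLeaf, if_neg (Ne.symm hm.1.1), if_neg hm.1.2, ih hm.2 (by omega)]
    simp only [Prod.mk.injEq, true_and]
    omega

theorem eraseLeaf_spec {m : ℕ} {ts : List OTree} (hinc : ∀ t ∈ ts, t.Increasing)
    (hm : ∀ x ∈ forestPreorder ts, x ≤ m) (hmem : m ∈ forestPreorder ts) :
    (eraseLeaf m ts).2 < numSlots (eraseLeaf m ts).1 ∧
      insertLeaf m (eraseLeaf m ts).1 (eraseLeaf m ts).2 = ts := by
  fun_induction eraseLeaf m ts with
  | case1 => simp at hmem
  | case2 cs ts =>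
    refine ⟨one_le_numSlots ts, ?_⟩
    obtain _ | ⟨c, cs⟩ := cs
    · exact insertLeaf_zero m ts
    · have hc := (increasing_node_iff.1 (hinc _ List.mem_cons_self) c List.mem_cons_self).1
      have := hm c.label (by simp [label_mem_preorder])
      omega
  | case3 l cs ts hl hcs ih =>
    rw [List.forall_mem_cons] at hinc
    simp only [forestPreorder_cons, preorder_node, List.mem_cons, List.mem_append] at hm
    obtain ⟨hlt, hins⟩ :=
      ih (fun t ht => (increasing_node_iff.1 hinc.1 t ht).2) (fun x hx => hm x (by tauto)) hcs
    refine ⟨by rw [numSlots_cons]; omega, ?_⟩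
    rw [insertLeaf, if_neg (by omega), if_pos (by omega)]
    simp [hins]
  | case4 l cs ts hl hcs ih =>
    rw [List.forall_mem_cons] at hinc
    simp only [forestPreorder_cons, preorder_node, List.mem_cons, List.mem_append] at hm hmem
    obtain ⟨hlt, hins⟩ := ih hinc.2 (fun x hx => hm x (by tauto)) (by tauto)
    refine ⟨by rw [numSlots_cons]; omega, ?_⟩
    rw [insertLeaf, if_neg (by omega), if_neg (by omega)]
    simp [hins]

theorem eq_nil_of_forestPreorder_eq_nil {ts : List OTree} (h : forestPreorder ts = []) :
    ts = [] := by
  obtain _ | ⟨t, ts⟩ := ts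
  · rfl
  · simp [List.ne_nil_of_mem (label_mem_preorder t)] at h

end OTree

open OTree

theorem List.range_succ_perm_cons (n : ℕ) : (List.range (n + 1)).Perm (n :: List.range n) := by
  rw [List.range_succ]
  exact List.perm_append_singleton _ _

theorem IsIncOrdTree.numSlots_eq {n l : ℕ} {ts : List OTree} (h : IsIncOrdTree n (node l ts)) :
    numSlots ts = 2 * n + 1 := by
  have := h.2.1.length_eq
  simp only [preorder_node, List.length_cons, List.length_range, Nat.add_right_cancel_iff] at this
  simp [numSlots, this]

theorem isIncOrdTree_insertLeaf {n l : ℕ} {ts : List OTree} (h : IsIncOrdTree n (node l ts))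
    (j : ℕ) : IsIncOrdTree (n + 1) (node l (insertLeaf (n + 1) ts j)) := by
  obtain ⟨hl, hperm, hinc⟩ := h
  refine ⟨hl, ?_, increasing_insertLeaf hinc (fun x hx => ?_) j⟩
  · rw [preorder_node] at hperm ⊢
    refine (((perm_forestPreorder_insertLeaf _ ts j).cons l).trans (.swap _ _ _)).trans ?_
    exact (hperm.cons _).trans (List.range_succ_perm_cons _).symm
  · simpa [Nat.lt_succ_iff] using hperm.subset hx

theorem IsIncOrdTree.of_insertLeaf {n l j : ℕ} {ts : List OTree}
    (h : IsIncOrdTree (n + 1) (node l (insertLeaf (n + 1) ts j))) : IsIncOrdTree n (node l ts) := by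
  obtain ⟨hl, hperm, hinc⟩ := h
  refine ⟨hl, ?_, increasing_of_insertLeaf hinc⟩
  rw [preorder_node] at hperm ⊢
  refine List.Perm.cons_inv (a := n + 1) ((List.Perm.swap _ _ _).trans ?_)
  have := ((perm_forestPreorder_insertLeaf _ ts j).cons l).symm.trans hperm
  exact this.trans (List.range_succ_perm_cons _)

theorem isIncOrdTree_eraseLeaf {n l : ℕ} {ts : List OTree}
    (h : IsIncOrdTree (n + 1) (node l ts)) :
    insertLeaf (n + 1) (eraseLeaf (n + 1) ts).1 (eraseLeaf (n + 1) ts).2 = ts ∧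
      IsIncOrdTree n (node l (eraseLeaf (n + 1) ts).1) ∧
      (eraseLeaf (n + 1) ts).2 < 2 * n + 1 := by
  obtain ⟨hl, hperm, hinc⟩ := h
  rw [preorder_node] at hperm
  have hmem : n + 1 ∈ forestPreorder ts := by
    have := hperm.symm.subset (List.mem_range.2 (Nat.lt_succ_self (n + 1)))
    simp only [label] at hl
    simpa [hl] using this
  obtain ⟨hlt, hins⟩ := eraseLeaf_spec (increasing_node_iff.1 hinc · · |>.2)
    (fun x hx => by simpa [Nat.lt_succ_iff] using hperm.subset (List.mem_cons_of_mem l hx)) hmem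
  have h' : IsIncOrdTree n (node l (eraseLeaf (n + 1) ts).1) := by
    refine IsIncOrdTree.of_insertLeaf (j := (eraseLeaf (n + 1) ts).2) ?_
    rw [hins]
    exact ⟨hl, by rwa [preorder_node], hinc⟩
  exact ⟨hins, h', h'.numSlots_eq ▸ hlt⟩

def insertLeafEquiv (n : ℕ) :
    {t // IsIncOrdTree n t} × Fin (2 * n + 1) ≃ {t // IsIncOrdTree (n + 1) t} where
  toFun
    | (⟨node l ts, h⟩, j) => ⟨node l (insertLeaf (n + 1) ts j), isIncOrdTree_insertLeaf h j⟩
  invFun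
    | ⟨node l ts, h⟩ =>
      (⟨node l (eraseLeaf (n + 1) ts).1, (isIncOrdTree_eraseLeaf h).2.1⟩,
        ⟨(eraseLeaf (n + 1) ts).2, (isIncOrdTree_eraseLeaf h).2.2⟩)
  left_inv := by
    rintro ⟨⟨⟨l, ts⟩, h⟩, j⟩
    have hm : n + 1 ∉ forestPreorder ts := fun hx => by
      simpa using h.2.1.subset (a := n + 1) (by simp [hx])
    have hj : (j : ℕ) < numSlots ts := h.numSlots_eq.symm ▸ j.isLt
    simp [eraseLeaf_insertLeaf hm hj]
  right_inv := by
    rintro ⟨⟨l, ts⟩, h⟩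
    simp [(isIncOrdTree_eraseLeaf h).1]

theorem card_isIncOrdTree_zero : Nat.card {t // IsIncOrdTree 0 t} = 1 := by
  rw [Nat.card_eq_one_iff_exists]
  refine ⟨⟨node 0 [], rfl, by simp, by simp [increasing_node_iff]⟩, ?_⟩
  rintro ⟨⟨l, ts⟩, hl, hperm, -⟩
  have := hperm.length_eq
  simp only [preorder_node, List.length_cons, List.length_range, Nat.add_eq_right,
    List.length_eq_zero_iff] at this
  cases hl
  simp [eq_nil_of_forestPreorder_eq_nil this]

theorem card_isIncOrdTree_succ (n : ℕ) :
    Nat.card {t // IsIncOrdTree (n + 1) t} = (2 * n + 1) * Nat.card {t // IsIncOrdTree n t} := by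
  rw [← Nat.card_congr (insertLeafEquiv n), Nat.card_prod, Nat.card_fin, mul_comm]

theorem stmt3_general (n : ℕ) :
    Nat.card {t : OTree // IsIncOrdTree n t}
      = Nat.doubleFactorial (2 * n - 1) := by
  induction n with
  | zero => exact card_isIncOrdTree_zero
  | succ n ih =>
    rw [card_isIncOrdTree_succ, ih, show 2 * (n + 1) - 1 = 2 * n + 1 by omega,
      Nat.doubleFactorial_add_one]

theorem stmt3 (n : ℕ) (hn : 1 ≤ n) :
    Nat.card {t : OTree // IsIncOrdTree n t}
      = Nat.doubleFactorial (2 * n - 1) :=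
  stmt3_general n
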